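/- Let (K, r_n) and (K, r_n′) be pre-extenders on the same n-maniplex K. The following are equivalent: (1) there is an isomorphism φ : U(K, r_n) → U(K, r_n′) (a bijection of flag sets intertwining the respective monodromies) that acts as the identity on the base facet, i.e. (Φ, 1)φ = (Φ, 1) for every flag Φ of K; (2) there is an (r_n, r_n′)-friendly set S ⊆ Aut(K) containing the identity of Aut(K); (3) ♥(K, r_n) = ♥(K, r_n′) and for every flag Φ of K there exists τ ∈ ♥(K, r_n) with r_n′ Φ = (r_n Φ)τ (i.e. K_{r_n}/♥(K, r_n) = K_{r_n′}/♥(K, r_n′)). -/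

import Mathlib

/-! ## Basic notions: maniplexes, premaniplexes, orbits, automorphisms -/

/-- One monodromy step using an index satisfying `P`. -/
def StepOn {K : Type*} {n : ℕ} (r : Fin n → K → K) (P : Fin n → Prop) (x y : K) : Prop :=
  ∃ i, P i ∧ r i x = y

/-- `y` is reachable from `x` by monodromies whose index satisfies `P`;
this is the orbit relation of the subgroup generated by those monodromies. -/
def ReachOn {K : Type*} {n : ℕ} (r : Fin n → K → K) (P : Fin n → Prop) : K → K → Prop :=
  Relation.ReflTransGen (StepOn r P)

/-- Orbit relation of the full monodromy group. -/
def ConnRel {K : Type*} {n : ℕ} (r : Fin n → K → K) : K → K → Prop :=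
  ReachOn r fun _ => True

/-- Same facet: orbit relation of `r_0, …, r_{n-2}`. -/
def FacetRel {K : Type*} {n : ℕ} (r : Fin n → K → K) : K → K → Prop :=
  ReachOn r fun i => (i : ℕ) + 1 < n

/-- Same vertex: orbit relation of `r_1, …, r_{n-1}`. -/
def VertexRel {K : Type*} {n : ℕ} (r : Fin n → K → K) : K → K → Prop :=
  ReachOn r fun i => 1 ≤ (i : ℕ)

/-- An `n`-maniplex on the flag set `K`, given by its monodromies `r_0, …, r_{n-1}`. -/
structure IsManiplex {K : Type*} (n : ℕ) (r : Fin n → K → K) : Prop where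
  nonempty : Nonempty K
  invol : ∀ i, Function.Involutive (r i)
  fixfree : ∀ (i : Fin n) (x : K), r i x ≠ x
  fixfree₂ : ∀ (i j : Fin n), i ≠ j → ∀ x : K, r i (r j x) ≠ x
  sq : ∀ (i j : Fin n), 2 ≤ |(i : ℤ) - (j : ℤ)| → ∀ x : K, r i (r j (r i (r j x))) = x
  conn : ∀ x y : K, ConnRel r x y

/-- A premaniplex of rank `n` (fixed points allowed, connectivity not required). -/
structure IsPremaniplex {K : Type*} (n : ℕ) (r : Fin n → K → K) : Prop where
  invol : ∀ i, Function.Involutive (r i)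
  sq : ∀ (i j : Fin n), 2 ≤ |(i : ℤ) - (j : ℤ)| → ∀ x : K, r i (r j (r i (r j x))) = x

/-- The automorphism group: permutations of the flags commuting with every monodromy. -/
def autGroup {K : Type*} {n : ℕ} (r : Fin n → K → K) : Subgroup (Equiv.Perm K) where
  carrier := {τ : Equiv.Perm K | ∀ (i : Fin n) (x : K), τ (r i x) = r i (τ x)}
  one_mem' := by intro i x; rfl
  mul_mem' := by
    intro a b ha hb i x
    simp only [Set.mem_setOf_eq] at ha hb ⊢
    simp only [Equiv.Perm.mul_apply]
    rw [hb i x, ha i (b x)]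
  inv_mem' := by
    intro a ha i x
    simp only [Set.mem_setOf_eq] at ha ⊢
    have h := ha i (a⁻¹ x)
    rw [show a (a⁻¹ x) = x by simp] at h
    rw [← h, show a⁻¹ (a (r i (a⁻¹ x))) = r i (a⁻¹ x) by simp]

/-- A pre-extender: an involutory permutation `rn` of the flags of the `n`-maniplex `(K, r)`
commuting with `r_0, …, r_{n-2}`. -/
structure IsPreExtender {K : Type*} {n : ℕ} (r : Fin n → K → K) (rn : K → K) : Prop where
  maniplex : IsManiplex n r
  rn_invol : Function.Involutive rn
  rn_comm : ∀ i : Fin n, (i : ℕ) + 1 < n → ∀ x : K, rn (r i x) = r i (rn x)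

/-- A Cayley extender `(K, rn, ξ)` with voltage group `G`; the voltage is encoded as a
function on flags which is constant on facets. -/
structure IsCayleyExtender {K : Type*} {G : Type*} [Group G] {n : ℕ}
    (r : Fin n → K → K) (rn : K → K) (ξ : K → G) : Prop where
  maniplex : IsManiplex n r
  rn_invol : Function.Involutive rn
  rn_comm : ∀ i : Fin n, (i : ℕ) + 1 < n → ∀ x : K, rn (r i x) = r i (rn x)
  const : ∀ Φ Ψ : K, FacetRel r Φ Ψ → ξ Φ = ξ Ψ
  voltage_inv : ∀ Φ : K, ξ (rn Φ) = (ξ Φ)⁻¹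

/-- A Cayley coextender `(K, r_{-1}, ξ')` with voltage group `G'`; the voltage is encoded as
a function on flags which is constant on vertices. -/
structure IsCayleyCoextender {K : Type*} {G' : Type*} [Group G'] {n : ℕ}
    (r : Fin n → K → K) (rm : K → K) (ξ' : K → G') : Prop where
  maniplex : IsManiplex n r
  rm_invol : Function.Involutive rm
  rm_comm : ∀ i : Fin n, 1 ≤ (i : ℕ) → ∀ x : K, rm (r i x) = r i (rm x)
  const : ∀ Φ Ψ : K, VertexRel r Φ Ψ → ξ' Φ = ξ' Ψ
  voltage_inv : ∀ Φ : K, ξ' (rm Φ) = (ξ' Φ)⁻¹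

/-- Monodromies of the derived graph `K_{rn}^ξ` on flag set `K × G`. -/
def derivedMono {K : Type*} {G : Type*} [Group G] {n : ℕ}
    (r : Fin n → K → K) (rn : K → K) (ξ : K → G) : Fin (n + 1) → K × G → K × G :=
  fun i p =>
    if h : (i : ℕ) < n then (r ⟨(i : ℕ), h⟩ p.1, p.2) else (rn p.1, ξ p.1 * p.2)

/-- Monodromies of the derived graph `K_{r_{-1}}^{ξ'}` of a coextender, on flag set `K × G'`. -/
def coderivedMono {K : Type*} {G' : Type*} [Group G'] {n : ℕ}
    (r : Fin n → K → K) (rm : K → K) (ξ' : K → G') : Fin (n + 1) → K × G' → K × G' :=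
  fun i p =>
    if _h : (i : ℕ) = 0 then (rm p.1, ξ' p.1 * p.2)
    else (r ⟨(i : ℕ) - 1, by have := i.isLt; omega⟩ p.1, p.2)

/-- Monodromies of the flat amalgamation, on flag set `K × G' × G`. -/
def amalgMono {K : Type*} {G' : Type*} {G : Type*} [Group G'] [Group G] {n : ℕ}
    (r : Fin n → K → K) (rm : K → K) (rn : K → K) (ξ' : K → G') (ξ : K → G) :
    Fin (n + 2) → K × G' × G → K × G' × G :=
  fun i p =>
    if _h0 : (i : ℕ) = 0 then (rm p.1, ξ' p.1 * p.2.1, p.2.2)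
    else if _hn : (i : ℕ) = n + 1 then (rn p.1, p.2.1, ξ p.1 * p.2.2)
    else (r ⟨(i : ℕ) - 1, by have := i.isLt; omega⟩ p.1, p.2.1, p.2.2)

/-- The path intersection property characterizing flag graphs of polytopes. -/
def IsPolytopal {K : Type*} {m : ℕ} (t : Fin m → K → K) : Prop :=
  ∀ (x y : K) (k l : ℕ), k ≤ l → l < m →
    ReachOn t (fun i => k ≤ (i : ℕ)) x y →
    ReachOn t (fun i => (i : ℕ) ≤ l) x y →
    ReachOn t (fun i => k ≤ (i : ℕ) ∧ (i : ℕ) ≤ l) x y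

/-- `S` is an `(rn, rn')`-friendly set: for every flag `Φ` and `τ ∈ S` there is `σ ∈ S`
with `rn'(Φτ) = (rn Φ)σ` (automorphisms act on the right, i.e. by function application). -/
def FriendlySet {K : Type*} (rn rn' : K → K) (S : Set (Equiv.Perm K)) : Prop :=
  ∀ Φ : K, ∀ τ ∈ S, ∃ σ ∈ S, rn' (τ Φ) = σ (rn Φ)

/-- `♥(K, rn)`: the union of all `rn`-friendly subsets of `Aut(K)`. -/
def heartSet {K : Type*} {n : ℕ} (r : Fin n → K → K) (rn : K → K) : Set (Equiv.Perm K) :=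
  ⋃₀ {S : Set (Equiv.Perm K) | S ⊆ ↑(autGroup r) ∧ FriendlySet rn rn S}

/-- Relations of the universal voltage group `G(K, rn)`: one generator per flag, generators of
flags in the same facet are identified, and `α_F · α_{rn F} = 1`. -/
def UnivRels {K : Type*} {n : ℕ} (r : Fin n → K → K) (rn : K → K) : Set (FreeGroup K) :=
  {w | ∃ Φ Ψ : K, FacetRel r Φ Ψ ∧ w = FreeGroup.of Φ * (FreeGroup.of Ψ)⁻¹} ∪
    {w | ∃ Φ : K, w = FreeGroup.of Φ * FreeGroup.of (rn Φ)}

/-- The universal voltage assignment `Φ ↦ α_{F_Φ}` into `G(K, rn)`. -/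
def univVoltage {K : Type*} {n : ℕ} (r : Fin n → K → K) (rn : K → K) :
    K → PresentedGroup (UnivRels r rn) :=
  fun Φ => PresentedGroup.of Φ


namespace S18

open Function Equiv
open scoped Pointwise

variable {K : Type*} {n : ℕ}

section Basic
variable (r : Fin n → K → K)

theorem reachOn_symm {P : Fin n → Prop} (hinv : ∀ i, Involutive (r i)) {x y : K}
    (h : ReachOn r P x y) : ReachOn r P y x := by
  induction h with
  | refl => exact .refl
  | tail _ hstep ih =>
    obtain ⟨i, hP, rfl⟩ := hstep
    exact Relation.ReflTransGen.head ⟨i, hP, hinv i _⟩ ih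

theorem reachOn_trans {P : Fin n → Prop} {x y z : K}
    (h : ReachOn r P x y) (h' : ReachOn r P y z) : ReachOn r P x z :=
  Relation.ReflTransGen.trans h h'

theorem aut_reachOn {τ : Equiv.Perm K} (hτ : τ ∈ autGroup r) {P : Fin n → Prop} {x y : K}
    (h : ReachOn r P x y) : ReachOn r P (τ x) (τ y) := by
  induction h with
  | refl => exact .refl
  | tail _ hstep ih =>
    obtain ⟨i, hP, rfl⟩ := hstep
    exact Relation.ReflTransGen.tail ih ⟨i, hP, (hτ i _).symm⟩

theorem rn_facetRel {rn : K → K}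
    (hc : ∀ i : Fin n, (i : ℕ) + 1 < n → ∀ x, rn (r i x) = r i (rn x)) {x y : K}
    (h : FacetRel r x y) : FacetRel r (rn x) (rn y) := by
  induction h with
  | refl => exact .refl
  | tail _ hstep ih =>
    obtain ⟨i, hP, rfl⟩ := hstep
    exact Relation.ReflTransGen.tail ih ⟨i, hP, (hc i hP _).symm⟩

end Basic

section Friendly
variable {r : Fin n → K → K}

theorem friendly_comp {rnA rnB rnC : K → K} {S T : Set (Equiv.Perm K)}
    (hS : FriendlySet rnA rnB S) (hT : FriendlySet rnB rnC T) :
    FriendlySet rnA rnC (T * S) := by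
  rintro Φ τ hτ
  obtain ⟨t, ht, s, hs, rfl⟩ := hτ
  obtain ⟨σ₁, hσ₁, h1⟩ := hS Φ s hs
  obtain ⟨σ₂, hσ₂, h2⟩ := hT (s Φ) t ht
  exact ⟨σ₂ * σ₁, Set.mul_mem_mul hσ₂ hσ₁, by
    simp only [Equiv.Perm.mul_apply] at *
    rw [h2, h1]⟩

theorem friendly_inv {rnA rnB : K → K} {S : Set (Equiv.Perm K)}
    (h : FriendlySet rnA rnB S) : FriendlySet rnB rnA S⁻¹ := by
  intro Φ τ hτ
  rw [Set.mem_inv] at hτ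
  obtain ⟨σ₀, hσ₀, h0⟩ := h (τ Φ) τ⁻¹ hτ
  refine ⟨σ₀⁻¹, by rwa [Set.mem_inv, inv_inv], ?_⟩
  have h1 : rnB (τ⁻¹ (τ Φ)) = σ₀ (rnA (τ Φ)) := h0
  rw [show τ⁻¹ (τ Φ) = Φ from τ.symm_apply_apply Φ] at h1
  rw [h1]
  exact (σ₀.symm_apply_apply _).symm

theorem heart_subset_aut (r : Fin n → K → K) (rn : K → K) :
    heartSet r rn ⊆ ↑(autGroup r) := by
  rintro τ ⟨S, ⟨hsub, _⟩, hτ⟩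
  exact hsub hτ

theorem heart_friendly (r : Fin n → K → K) (rn : K → K) :
    FriendlySet rn rn (heartSet r rn) := by
  rintro Φ τ ⟨S, ⟨hsub, hf⟩, hτ⟩
  obtain ⟨σ, hσ, h⟩ := hf Φ τ hτ
  exact ⟨σ, ⟨S, ⟨hsub, hf⟩, hσ⟩, h⟩

theorem subset_heart {r : Fin n → K → K} {rn : K → K} {S : Set (Equiv.Perm K)}
    (hsub : S ⊆ ↑(autGroup r)) (hf : FriendlySet rn rn S) : S ⊆ heartSet r rn :=
  fun x hx => ⟨S, ⟨hsub, hf⟩, hx⟩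

theorem one_mem_heart (r : Fin n → K → K) (rn : K → K) : (1 : Equiv.Perm K) ∈ heartSet r rn := by
  refine ⟨{1}, ⟨?_, ?_⟩, rfl⟩
  · intro x hx; rw [Set.mem_singleton_iff] at hx; subst hx; exact (autGroup r).one_mem
  · intro Φ τ hτ
    rw [Set.mem_singleton_iff] at hτ; subst hτ
    exact ⟨1, rfl, rfl⟩

theorem heart_mul_mem {r : Fin n → K → K} {rn : K → K} {a b : Equiv.Perm K}
    (ha : a ∈ heartSet r rn) (hb : b ∈ heartSet r rn) : a * b ∈ heartSet r rn := by
  have h : (heartSet r rn) * (heartSet r rn) ⊆ heartSet r rn := by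
    apply subset_heart
    · rintro x ⟨u, hu, v, hv, rfl⟩
      exact (autGroup r).mul_mem (heart_subset_aut r rn hu) (heart_subset_aut r rn hv)
    · exact friendly_comp (heart_friendly r rn) (heart_friendly r rn)
  exact h (Set.mul_mem_mul ha hb)

variable {rn rn' : K → K} {S : Set (Equiv.Perm K)}


theorem inv_subset_aut {r : Fin n → K → K} (hsub : S ⊆ ↑(autGroup r)) : S⁻¹ ⊆ ↑(autGroup r) := by
  intro x hx
  rw [Set.mem_inv] at hx
  simpa using (autGroup r).inv_mem (hsub hx)

theorem mul_subset_aut {r : Fin n → K → K} {T : Set (Equiv.Perm K)} (hS : S ⊆ ↑(autGroup r))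
    (hT : T ⊆ ↑(autGroup r)) : T * S ⊆ ↑(autGroup r) := by
  rintro x ⟨t, ht, s, hs, rfl⟩
  exact (autGroup r).mul_mem (hT ht) (hS hs)

theorem one_mem_inv (h1 : (1 : Equiv.Perm K) ∈ S) : (1 : Equiv.Perm K) ∈ S⁻¹ := by
  rw [Set.mem_inv, inv_one]; exact h1

/-- From a friendly set containing 1: S ⊆ heart rn. -/
theorem S_subset_heart (hsub : S ⊆ ↑(autGroup r)) (hf : FriendlySet rn rn' S)
    (h1 : (1 : Equiv.Perm K) ∈ S) : S ⊆ heartSet r rn := by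
  have hcomp : FriendlySet rn rn (S⁻¹ * S) := friendly_comp hf (friendly_inv hf)
  have hsub' : S⁻¹ * S ⊆ ↑(autGroup r) := mul_subset_aut hsub (inv_subset_aut hsub)
  intro s hs
  have : s ∈ S⁻¹ * S := by
    have := Set.mul_mem_mul (one_mem_inv h1) hs
    rwa [one_mul] at this
  exact subset_heart hsub' hcomp this

theorem heart_eq_of_friendly (hsub : S ⊆ ↑(autGroup r)) (hf : FriendlySet rn rn' S)
    (h1 : (1 : Equiv.Perm K) ∈ S) : heartSet r rn = heartSet r rn' := by
  have haux : ∀ (rnA rnB : K → K) (T : Set (Equiv.Perm K)), T ⊆ ↑(autGroup r) →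
      FriendlySet rnA rnB T → (1 : Equiv.Perm K) ∈ T →
      heartSet r rnA ⊆ heartSet r rnB := by
    intro rnA rnB T hTsub hTf hT1
    have hcomp : FriendlySet rnB rnB (T * (heartSet r rnA * T⁻¹)) :=
      friendly_comp (friendly_comp (friendly_inv hTf) (heart_friendly r rnA)) hTf
    have hsub' : T * (heartSet r rnA * T⁻¹) ⊆ ↑(autGroup r) :=
      mul_subset_aut (mul_subset_aut (inv_subset_aut hTsub) (heart_subset_aut r rnA)) hTsub
    intro h hh
    have hmem : h ∈ T * (heartSet r rnA * T⁻¹) := by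
      have := Set.mul_mem_mul hT1 (Set.mul_mem_mul hh (one_mem_inv hT1))
      rwa [one_mul, mul_one] at this
    exact subset_heart hsub' hcomp hmem
  apply le_antisymm
  · exact haux rn rn' S hsub hf h1
  · exact haux rn' rn S⁻¹ (inv_subset_aut hsub) (friendly_inv hf) (one_mem_inv h1)

theorem heart_covers (hsub : S ⊆ ↑(autGroup r)) (hf : FriendlySet rn rn' S)
    (h1 : (1 : Equiv.Perm K) ∈ S) : ∀ Φ : K, ∃ τ ∈ heartSet r rn, rn' Φ = τ (rn Φ) := by
  intro Φ
  obtain ⟨σ, hσ, h⟩ := hf Φ 1 h1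
  exact ⟨σ, S_subset_heart hsub hf h1 hσ, by simpa using h⟩

/-- C → B. -/
theorem friendly_of_heart (hheq : heartSet r rn = heartSet r rn')
    (hc : ∀ Φ : K, ∃ τ ∈ heartSet r rn, rn' Φ = τ (rn Φ)) :
    FriendlySet rn rn' (heartSet r rn) := by
  intro Φ τ hτ
  obtain ⟨ρ, hρ, h1⟩ := hc (τ Φ)
  obtain ⟨σ₁, hσ₁, h2⟩ := heart_friendly r rn Φ τ hτ
  exact ⟨ρ * σ₁, heart_mul_mem hρ hσ₁, by
    rw [h1, h2]; rfl⟩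

end Friendly
end S18
namespace S18
open Function Equiv
open scoped Pointwise

variable {K : Type*} {n : ℕ}

section PG
variable (r : Fin n → K → K) (rn : K → K)

theorem pg_rel_one {w : FreeGroup K} (hw : w ∈ UnivRels r rn) :
    PresentedGroup.mk (UnivRels r rn) w = 1 :=
  (QuotientGroup.eq_one_iff w).2 (Subgroup.subset_normalClosure hw)

theorem pg_of_facet {Φ Ψ : K} (h : FacetRel r Φ Ψ) :
    (PresentedGroup.of Φ : PresentedGroup (UnivRels r rn)) = PresentedGroup.of Ψ := by
  have h1 := pg_rel_one r rn (Or.inl ⟨Φ, Ψ, h, rfl⟩)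
  rw [map_mul, map_inv] at h1
  exact mul_inv_eq_one.mp h1

theorem pg_of_mul_rn (Φ : K) :
    (PresentedGroup.of Φ : PresentedGroup (UnivRels r rn)) * PresentedGroup.of (rn Φ) = 1 := by
  have h1 := pg_rel_one r rn (Or.inr ⟨Φ, rfl⟩)
  rwa [map_mul] at h1

theorem pg_inv_of (Φ : K) :
    (PresentedGroup.of Φ : PresentedGroup (UnivRels r rn))⁻¹ = PresentedGroup.of (rn Φ) :=
  inv_eq_of_mul_eq_one_right (pg_of_mul_rn r rn Φ)

theorem uv_facet {Φ Ψ : K} (h : FacetRel r Φ Ψ) : univVoltage r rn Φ = univVoltage r rn Ψ :=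
  pg_of_facet r rn h

theorem uv_rn (Φ : K) : univVoltage r rn (rn Φ) = (univVoltage r rn Φ)⁻¹ :=
  (pg_inv_of r rn Φ).symm

theorem pg_induction {α : Type*} {rels : Set (FreeGroup α)} (p : PresentedGroup rels → Prop)
    (h1 : p 1) (hof : ∀ (a : α) (g), p g → p (PresentedGroup.of a * g))
    (hinv : ∀ (a : α) (g), p g → p ((PresentedGroup.of a)⁻¹ * g)) : ∀ g, p g := by
  have main : ∀ w : FreeGroup α, ∀ g, p g → p (PresentedGroup.mk rels w * g) := by
    intro w
    refine FreeGroup.induction_on w ?_ ?_ ?_ ?_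
    · intro g hg; simpa using hg
    · intro x g hg; exact hof x g hg
    · intro x _ g hg
      have hh : PresentedGroup.mk rels (FreeGroup.of x)⁻¹ * g = (PresentedGroup.of x)⁻¹ * g := by
        rw [map_inv]; rfl
      rw [hh]; exact hinv x g hg
    · intro x y hx hy g hg
      rw [map_mul, mul_assoc]; exact hx _ (hy _ hg)
  intro g
  obtain ⟨w, rfl⟩ := PresentedGroup.mk_surjective rels g
  simpa using main w 1 h1

end PG

section Derived
variable (r : Fin n → K → K) (rn : K → K) {G₂ : Type*} [Group G₂] (ξ : K → G₂)

theorem derivedMono_lt (i : Fin (n+1)) (h : (i:ℕ) < n) (p : K × G₂) :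
    derivedMono r rn ξ i p = (r ⟨i, h⟩ p.1, p.2) := dif_pos h

theorem derivedMono_last (p : K × G₂) :
    derivedMono r rn ξ (Fin.last n) p = (rn p.1, ξ p.1 * p.2) := dif_neg (by simp)

theorem fin_eq_last {i : Fin (n+1)} (h : ¬ (i:ℕ) < n) : i = Fin.last n :=
  Fin.ext (by have := i.isLt; simp; omega)

theorem derivedMono_invol (hinv : ∀ i, Involutive (r i)) (hrn : Involutive rn)
    (hξ : ∀ Φ, ξ (rn Φ) = (ξ Φ)⁻¹) : ∀ i, Involutive (derivedMono r rn ξ i) := by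
  intro i p
  by_cases h : (i:ℕ) < n
  · rw [derivedMono_lt r rn ξ i h, derivedMono_lt r rn ξ i h]
    cases p with
    | mk a g => simp [hinv ⟨i, h⟩ a]
  · rw [fin_eq_last h, derivedMono_last, derivedMono_last]
    cases p with
    | mk a g => simp [hrn a, hξ a, ← mul_assoc]

theorem derived_fiber (hman : IsManiplex n r) (g : G₂) {Φ Ψ : K} (h : ConnRel r Φ Ψ) :
    ConnRel (derivedMono r rn ξ) (Φ, g) (Ψ, g) := by
  induction h with
  | refl => exact .refl
  | tail _ hstep ih =>
    obtain ⟨i, -, rfl⟩ := hstep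
    refine Relation.ReflTransGen.tail ih ⟨⟨(i:ℕ), by omega⟩, trivial, ?_⟩
    rw [derivedMono_lt r rn ξ _ (by simpa using i.isLt)]

theorem derived_step_last (x : K × G₂) :
    StepOn (derivedMono r rn ξ) (fun _ => True) x (rn x.1, ξ x.1 * x.2) :=
  ⟨Fin.last n, trivial, derivedMono_last r rn ξ x⟩

theorem derived_conn (hpre : IsPreExtender r rn) :
    ∀ x y : K × PresentedGroup (UnivRels r rn),
      ConnRel (derivedMono r rn (univVoltage r rn)) x y := by
  have hman := hpre.maniplex
  have hstep : ∀ (a : K) (g : PresentedGroup (UnivRels r rn)),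
      (∀ (Φ Ψ : K) (h : PresentedGroup (UnivRels r rn)),
        ConnRel (derivedMono r rn (univVoltage r rn)) (Φ, h) (Ψ, g * h)) →
      ∀ (Φ Ψ : K) (h : PresentedGroup (UnivRels r rn)),
        ConnRel (derivedMono r rn (univVoltage r rn)) (Φ, h) (Ψ, (PresentedGroup.of a * g) * h) := by
    intro a g ih Φ Ψ h
    have h1 := ih Φ a h
    have h2 := (derived_step_last r rn (univVoltage r rn) (a, g * h))
    have h3 : ConnRel (derivedMono r rn (univVoltage r rn))
        (rn a, univVoltage r rn a * (g * h)) (Ψ, (PresentedGroup.of a * g) * h) := by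
      have := derived_fiber r rn (univVoltage r rn) hman (univVoltage r rn a * (g * h))
        (hman.conn (rn a) Ψ)
      have he : univVoltage r rn a * (g * h) = (PresentedGroup.of a * g) * h := by
        simp [univVoltage, mul_assoc]
      rw [he] at this ⊢
      exact this
    exact reachOn_trans _ (Relation.ReflTransGen.tail h1 h2) h3
  have main : ∀ (g : PresentedGroup (UnivRels r rn)) (Φ Ψ : K) (h),
      ConnRel (derivedMono r rn (univVoltage r rn)) (Φ, h) (Ψ, g * h) := by
    refine pg_induction _ ?_ ?_ ?_
    · intro Φ Ψ h; rw [one_mul]; exact derived_fiber r rn _ hman h (hman.conn Φ Ψ)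
    · exact hstep
    · intro a g ih
      rw [pg_inv_of r rn a]
      exact hstep (rn a) g ih
  intro x y
  have h := main (y.2 * x.2⁻¹) x.1 y.1 x.2
  simpa using h

theorem rigidity {X Y : Type*} {m : ℕ} {t : Fin m → X → X} {t' : Fin m → Y → Y}
    {B B₂ : X → Y} (hB : ∀ i x, B (t i x) = t' i (B x)) (hB₂ : ∀ i x, B₂ (t i x) = t' i (B₂ x))
    {x₀ : X} (hx : B x₀ = B₂ x₀) {x : X} (h : ConnRel t x₀ x) : B x = B₂ x := by
  induction h with
  | refl => exact hx
  | tail _ hstep ih =>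
    obtain ⟨i, -, rfl⟩ := hstep
    rw [hB, hB₂, ih]

end Derived
end S18
namespace S18
open Function Equiv

variable {K : Type*} {n : ℕ}

section NF
variable (r : Fin n → K → K) (rn : K → K)
variable (hinv : ∀ i, Involutive (r i))
  (hcomm : ∀ i : Fin n, (i:ℕ)+1 < n → ∀ x, rn (r i x) = r i (rn x))
  (hrn : Involutive rn)

def fSetoid : Setoid K :=
  ⟨FacetRel r, ⟨fun _ => .refl, fun h => reachOn_symm r hinv h, fun h h' => reachOn_trans r h h'⟩⟩

abbrev FQ := Quotient (fSetoid r hinv)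

def fIota : FQ r hinv → FQ r hinv :=
  Quotient.lift (fun a => Quotient.mk (fSetoid r hinv) (rn a))
    (fun _ _ h => Quotient.sound (rn_facetRel r hcomm h))

theorem fIota_mk (Φ : K) :
    fIota r rn hinv hcomm (Quotient.mk (fSetoid r hinv) Φ) = Quotient.mk (fSetoid r hinv) (rn Φ) :=
  rfl

include hrn in
theorem fIota_invol : Involutive (fIota r rn hinv hcomm) := by
  intro q
  induction q using Quotient.ind with
  | _ a => show Quotient.mk _ (rn (rn a)) = _; rw [hrn a]

theorem facet_out {q : FQ r hinv} {Ψ : K} (h : Quotient.mk (fSetoid r hinv) Ψ = q) :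
    FacetRel r (Quotient.out q) Ψ := by
  subst h
  have h2 : (fSetoid r hinv).r (Quotient.out (Quotient.mk (fSetoid r hinv) Ψ)) Ψ :=
    Quotient.exact (Quotient.out_eq _)
  exact h2

def Red (l : List (FQ r hinv)) : Prop :=
  List.Chain' (fun a b => b ≠ fIota r rn hinv hcomm a) l

abbrev WRed := {l : List (FQ r hinv) // Red r rn hinv hcomm l}

open Classical in
noncomputable def Pfun (q : FQ r hinv) (l : WRed r rn hinv hcomm) : WRed r rn hinv hcomm :=
  if h : l.val.head? = some (fIota r rn hinv hcomm q) then ⟨l.val.tail, l.prop.tail⟩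
  else ⟨q :: l.val, by
    refine List.isChain_cons.mpr ⟨?_, l.prop⟩
    intro y hy he
    exact h (by rw [← he]; exact hy)⟩

include hrn in
theorem Pfun_cancel (q : FQ r hinv) (l : WRed r rn hinv hcomm) :
    Pfun r rn hinv hcomm (fIota r rn hinv hcomm q) (Pfun r rn hinv hcomm q l) = l := by
  classical
  obtain ⟨lv, hl⟩ := l
  by_cases h : lv.head? = some (fIota r rn hinv hcomm q)
  · rw [show Pfun r rn hinv hcomm q ⟨lv, hl⟩ = ⟨lv.tail, hl.tail⟩ from dif_pos h]
    cases lv with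
    | nil => simp at h
    | cons a t =>
      simp only [List.head?_cons, Option.some.injEq] at h
      subst h
      have hne : ¬ (t.head? = some (fIota r rn hinv hcomm (fIota r rn hinv hcomm q))) := by
        rw [fIota_invol r rn hinv hcomm hrn q]
        cases t with
        | nil => simp
        | cons b t' =>
          simp only [List.head?_cons, Option.some.injEq, List.tail_cons]
          have := (List.isChain_cons.mp hl).1 b (by simp)
          intro hbq
          exact this (by rw [hbq, fIota_invol r rn hinv hcomm hrn q])
      erw [show Pfun r rn hinv hcomm (fIota r rn hinv hcomm q) ⟨(_ :: t).tail, _⟩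
          = ⟨fIota r rn hinv hcomm q :: (fIota r rn hinv hcomm q :: t).tail, _⟩ from dif_neg (by simpa using hne)]
      rfl
  · rw [show Pfun r rn hinv hcomm q ⟨lv, hl⟩ = ⟨q :: lv, _⟩ from dif_neg h]
    have hpos : (q :: lv).head? = some (fIota r rn hinv hcomm (fIota r rn hinv hcomm q)) := by
      rw [fIota_invol r rn hinv hcomm hrn q]; simp
    erw [show Pfun r rn hinv hcomm (fIota r rn hinv hcomm q) ⟨q :: lv, _⟩
        = ⟨(q :: lv).tail, _⟩ from dif_pos hpos]
    rfl

noncomputable def PEquiv (q : FQ r hinv) : Equiv.Perm (WRed r rn hinv hcomm) :=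
  ⟨Pfun r rn hinv hcomm q, Pfun r rn hinv hcomm (fIota r rn hinv hcomm q),
    fun l => Pfun_cancel r rn hinv hcomm hrn q l,
    fun l => by
      have h := Pfun_cancel r rn hinv hcomm hrn (fIota r rn hinv hcomm q) l
      rwa [fIota_invol r rn hinv hcomm hrn q] at h⟩

theorem pgf_rels : ∀ w ∈ UnivRels r rn,
    FreeGroup.lift (fun Φ => PEquiv r rn hinv hcomm hrn (Quotient.mk (fSetoid r hinv) Φ)) w = 1 := by
  rintro w (⟨Φ, Ψ, hF, rfl⟩ | ⟨Φ, rfl⟩)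
  · rw [map_mul, map_inv, FreeGroup.lift_apply_of, FreeGroup.lift_apply_of, mul_inv_eq_one]
    congr 1
    exact Quotient.sound hF
  · rw [map_mul, FreeGroup.lift_apply_of, FreeGroup.lift_apply_of]
    refine Equiv.ext fun l => ?_
    have : Quotient.mk (fSetoid r hinv) (rn Φ)
        = fIota r rn hinv hcomm (Quotient.mk (fSetoid r hinv) Φ) := rfl
    rw [this]
    show PEquiv r rn hinv hcomm hrn _ (PEquiv r rn hinv hcomm hrn _ l) = l
    show Pfun r rn hinv hcomm _ (Pfun r rn hinv hcomm _ l) = l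
    have h2 := Pfun_cancel r rn hinv hcomm hrn
      (fIota r rn hinv hcomm (Quotient.mk (fSetoid r hinv) Φ)) l
    rwa [fIota_invol r rn hinv hcomm hrn] at h2

noncomputable def toPerm : PresentedGroup (UnivRels r rn) →* Equiv.Perm (WRed r rn hinv hcomm) :=
  PresentedGroup.toGroup (pgf_rels r rn hinv hcomm hrn)

noncomputable def NF (g : PresentedGroup (UnivRels r rn)) : WRed r rn hinv hcomm :=
  toPerm r rn hinv hcomm hrn g ⟨[], List.isChain_nil⟩

theorem NF_one : NF r rn hinv hcomm hrn 1 = ⟨[], List.isChain_nil⟩ := by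
  rw [NF, map_one]; rfl

theorem NF_of_mul (Φ : K) (g : PresentedGroup (UnivRels r rn)) :
    NF r rn hinv hcomm hrn (PresentedGroup.of Φ * g)
      = Pfun r rn hinv hcomm (Quotient.mk (fSetoid r hinv) Φ) (NF r rn hinv hcomm hrn g) := by
  rw [NF, NF, map_mul]
  have h : toPerm r rn hinv hcomm hrn (PresentedGroup.of Φ)
      = PEquiv r rn hinv hcomm hrn (Quotient.mk (fSetoid r hinv) Φ) :=
    PresentedGroup.toGroup.of _
  rw [Equiv.Perm.mul_apply, h]
  rfl

end NF
end S18
namespace S18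
open Function Equiv

variable {K : Type*} {n : ℕ}

section Exist

theorem partner_ext (r : Fin n → K → K) (rn : K → K)
    (hcomm : ∀ i : Fin n, (i:ℕ)+1 < n → ∀ x, rn (r i x) = r i (rn x))
    {τ σ : Equiv.Perm K} (hτ : τ ∈ autGroup r) (hσ : σ ∈ autGroup r) {Θ : K}
    (hbase : rn (τ Θ) = σ (rn Θ)) : ∀ Ψ, FacetRel r Θ Ψ → rn (τ Ψ) = σ (rn Ψ) := by
  intro Ψ h
  induction h with
  | refl => exact hbase
  | tail _ hstep ih =>
    obtain ⟨i, hP, rfl⟩ := hstep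
    rw [hτ i, hcomm i hP, ih, ← hσ i, ← hcomm i hP]

theorem partner_exists (r : Fin n → K → K) (rn : K → K)
    (hcomm : ∀ i : Fin n, (i:ℕ)+1 < n → ∀ x, rn (r i x) = r i (rn x))
    (H : Set (Equiv.Perm K)) (hH : H ⊆ ↑(autGroup r)) (hHf : FriendlySet rn rn H)
    {τ : Equiv.Perm K} (hτ : τ ∈ H) (Θ : K) :
    ∃ σ ∈ H, ∀ Ψ, FacetRel r Θ Ψ → rn (τ Ψ) = σ (rn Ψ) := by
  obtain ⟨σ, hσ, hb⟩ := hHf Θ τ hτ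
  exact ⟨σ, hσ, partner_ext r rn hcomm (hH hτ) (hH hσ) hb⟩

variable (r : Fin n → K → K) (rn : K → K)
  (hinv : ∀ i, Function.Involutive (r i))
  (hcomm : ∀ i : Fin n, (i:ℕ)+1 < n → ∀ x, rn (r i x) = r i (rn x))
  (hrn : Function.Involutive rn)
  (H : Set (Equiv.Perm K)) (hH : H ⊆ ↑(autGroup r)) (hHf : FriendlySet rn rn H)

noncomputable def upd (q : FQ r hinv) (τ : {x : Equiv.Perm K // x ∈ H}) :
    {x : Equiv.Perm K // x ∈ H} :=
  ⟨(partner_exists r rn hcomm H hH hHf τ.2 (Quotient.out q)).choose,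
   (partner_exists r rn hcomm H hH hHf τ.2 (Quotient.out q)).choose_spec.1⟩

theorem upd_spec (q : FQ r hinv) (τ : {x : Equiv.Perm K // x ∈ H}) :
    ∀ Ψ, FacetRel r (Quotient.out q) Ψ →
      rn (τ.1 Ψ) = (upd r rn hinv hcomm H hH hHf q τ).1 (rn Ψ) :=
  (partner_exists r rn hcomm H hH hHf τ.2 (Quotient.out q)).choose_spec.2

noncomputable def foldStep :
    FQ r hinv → ({x : Equiv.Perm K // x ∈ H} × PresentedGroup (UnivRels r rn)) →
      ({x : Equiv.Perm K // x ∈ H} × PresentedGroup (UnivRels r rn)) :=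
  fun q st => (upd r rn hinv hcomm H hH hHf q st.1,
    univVoltage r rn (st.1.1 (Quotient.out q)) * st.2)

noncomputable def Amap (τ₀ : {x : Equiv.Perm K // x ∈ H}) (c₀ : PresentedGroup (UnivRels r rn)) :
    K × PresentedGroup (UnivRels r rn) → K × PresentedGroup (UnivRels r rn) :=
  fun x =>
    (((NF r rn hinv hcomm hrn x.2).val.foldr (foldStep r rn hinv hcomm H hH hHf) (τ₀, c₀)).1.1 x.1,
     ((NF r rn hinv hcomm hrn x.2).val.foldr (foldStep r rn hinv hcomm H hH hHf) (τ₀, c₀)).2)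

theorem Amap_base (τ₀ : {x : Equiv.Perm K // x ∈ H}) (c₀ : PresentedGroup (UnivRels r rn))
    (Ψ : K) : Amap r rn hinv hcomm hrn H hH hHf τ₀ c₀ (Ψ, 1) = (τ₀.1 Ψ, c₀) := by
  simp only [Amap]
  rw [NF_one]
  rfl

theorem Amap_inter (τ₀ : {x : Equiv.Perm K // x ∈ H}) (c₀ : PresentedGroup (UnivRels r rn)) :
    ∀ (i : Fin (n+1)) (x),
      Amap r rn hinv hcomm hrn H hH hHf τ₀ c₀ (derivedMono r rn (univVoltage r rn) i x)
        = derivedMono r rn (univVoltage r rn) i (Amap r rn hinv hcomm hrn H hH hHf τ₀ c₀ x) := by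
  intro i x
  by_cases hlt : (i:ℕ) < n
  · rw [derivedMono_lt r rn _ i hlt, derivedMono_lt r rn _ i hlt]
    have hmem :=
      ((NF r rn hinv hcomm hrn x.2).val.foldr (foldStep r rn hinv hcomm H hH hHf) (τ₀, c₀)).1.2
    exact Prod.ext ((hH hmem) ⟨(i:ℕ), hlt⟩ x.1) rfl
  · rw [fin_eq_last hlt, derivedMono_last, derivedMono_last]
    obtain ⟨Ψ, g⟩ := x
    classical
    have hNF : NF r rn hinv hcomm hrn (univVoltage r rn Ψ * g)
        = Pfun r rn hinv hcomm (Quotient.mk (fSetoid r hinv) Ψ) (NF r rn hinv hcomm hrn g) :=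
      NF_of_mul r rn hinv hcomm hrn Ψ g
    by_cases hh : (NF r rn hinv hcomm hrn g).val.head?
        = some (fIota r rn hinv hcomm (Quotient.mk (fSetoid r hinv) Ψ))
    · -- cancellation case
      have hPv : (Pfun r rn hinv hcomm (Quotient.mk (fSetoid r hinv) Ψ)
            (NF r rn hinv hcomm hrn g)).val = (NF r rn hinv hcomm hrn g).val.tail := by
        simp only [Pfun]
        rw [dif_pos hh]
      have hcons : (NF r rn hinv hcomm hrn g).val
          = fIota r rn hinv hcomm (Quotient.mk (fSetoid r hinv) Ψ)
              :: (NF r rn hinv hcomm hrn g).val.tail := by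
        cases hc : (NF r rn hinv hcomm hrn g).val with
        | nil => rw [hc] at hh; cases hh
        | cons a t =>
          rw [hc] at hh
          simp only [List.head?_cons, Option.some.injEq] at hh
          rw [hh, List.tail_cons]
      set κ := (NF r rn hinv hcomm hrn g).val.tail.foldr
        (foldStep r rn hinv hcomm H hH hHf) (τ₀, c₀) with hκ
      have hfold : (NF r rn hinv hcomm hrn g).val.foldr
          (foldStep r rn hinv hcomm H hH hHf) (τ₀, c₀)
          = foldStep r rn hinv hcomm H hH hHf
              (fIota r rn hinv hcomm (Quotient.mk (fSetoid r hinv) Ψ)) κ := by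
        conv_lhs => rw [hcons]
        rfl
      have hfacet : FacetRel r
          (Quotient.out (fIota r rn hinv hcomm (Quotient.mk (fSetoid r hinv) Ψ))) (rn Ψ) :=
        facet_out r hinv rfl
      have hspec := upd_spec r rn hinv hcomm H hH hHf
        (fIota r rn hinv hcomm (Quotient.mk (fSetoid r hinv) Ψ)) κ.1 (rn Ψ) hfacet
      rw [hrn Ψ] at hspec
      have hg1 : κ.1.1 (rn Ψ) = rn ((upd r rn hinv hcomm H hH hHf
          (fIota r rn hinv hcomm (Quotient.mk (fSetoid r hinv) Ψ)) κ.1).1 Ψ) := by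
        rw [← hspec, hrn]
      have hvolt : univVoltage r rn (κ.1.1 (Quotient.out
            (fIota r rn hinv hcomm (Quotient.mk (fSetoid r hinv) Ψ))))
          = (univVoltage r rn ((upd r rn hinv hcomm H hH hHf
              (fIota r rn hinv hcomm (Quotient.mk (fSetoid r hinv) Ψ)) κ.1).1 Ψ))⁻¹ := by
        rw [show univVoltage r rn (κ.1.1 (Quotient.out
              (fIota r rn hinv hcomm (Quotient.mk (fSetoid r hinv) Ψ))))
            = univVoltage r rn (κ.1.1 (rn Ψ)) from
          uv_facet r rn (aut_reachOn r (hH κ.1.2) hfacet), hg1, uv_rn]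
      have key : Amap r rn hinv hcomm hrn H hH hHf τ₀ c₀ (rn Ψ, univVoltage r rn Ψ * g)
          = (κ.1.1 (rn Ψ), κ.2) := by
        simp only [Amap]
        rw [hNF, hPv]
      rw [key]
      simp only [Amap]
      rw [hfold]
      simp only [foldStep]
      refine Prod.ext hg1 ?_
      show κ.2 = _
      rw [hvolt, mul_inv_cancel_left]
    · -- prepend case
      have hPv : (Pfun r rn hinv hcomm (Quotient.mk (fSetoid r hinv) Ψ)
            (NF r rn hinv hcomm hrn g)).val
          = Quotient.mk (fSetoid r hinv) Ψ :: (NF r rn hinv hcomm hrn g).val := by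
        simp only [Pfun]
        rw [dif_neg hh]
      set st := (NF r rn hinv hcomm hrn g).val.foldr
        (foldStep r rn hinv hcomm H hH hHf) (τ₀, c₀) with hst
      have hfacet : FacetRel r (Quotient.out (Quotient.mk (fSetoid r hinv) Ψ)) Ψ :=
        facet_out r hinv rfl
      have key : Amap r rn hinv hcomm hrn H hH hHf τ₀ c₀ (rn Ψ, univVoltage r rn Ψ * g)
          = ((foldStep r rn hinv hcomm H hH hHf (Quotient.mk (fSetoid r hinv) Ψ) st).1.1 (rn Ψ),
             (foldStep r rn hinv hcomm H hH hHf (Quotient.mk (fSetoid r hinv) Ψ) st).2) := by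
        simp only [Amap]
        rw [hNF, hPv, List.foldr_cons]
      rw [key]
      simp only [Amap, foldStep]
      refine Prod.ext ?_ ?_
      · exact (upd_spec r rn hinv hcomm H hH hHf _ st.1 Ψ hfacet).symm
      · show univVoltage r rn (st.1.1 _) * st.2 = univVoltage r rn (st.1.1 Ψ) * st.2
        rw [uv_facet r rn (aut_reachOn r (hH st.1.2) hfacet)]

include hinv hcomm hrn hH hHf in
theorem exist_auto (τ₀ : Equiv.Perm K) (hτ₀ : τ₀ ∈ H) (c₀ : PresentedGroup (UnivRels r rn)) :
    ∃ A : K × PresentedGroup (UnivRels r rn) → K × PresentedGroup (UnivRels r rn),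
      (∀ (i : Fin (n+1)) (x), A (derivedMono r rn (univVoltage r rn) i x)
          = derivedMono r rn (univVoltage r rn) i (A x)) ∧
      (∀ Ψ : K, A (Ψ, 1) = (τ₀ Ψ, c₀)) :=
  ⟨Amap r rn hinv hcomm hrn H hH hHf ⟨τ₀, hτ₀⟩ c₀,
   Amap_inter r rn hinv hcomm hrn H hH hHf ⟨τ₀, hτ₀⟩ c₀,
   Amap_base r rn hinv hcomm hrn H hH hHf ⟨τ₀, hτ₀⟩ c₀⟩

end Exist
end S18
namespace S18
open Function Equiv

variable {K : Type*} {n : ℕ}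

theorem half (r : Fin n → K → K) (rn rn' : K → K)
    (hpre : IsPreExtender r rn) (hpre' : IsPreExtender r rn')
    (S : Set (Equiv.Perm K)) (hsub : S ⊆ ↑(autGroup r)) (hf : FriendlySet rn rn' S)
    (h1 : (1 : Equiv.Perm K) ∈ S) :
    ∃ e : K × PresentedGroup (UnivRels r rn) → K × PresentedGroup (UnivRels r rn'),
      (∀ (i : Fin (n+1)) (x), e (derivedMono r rn (univVoltage r rn) i x)
        = derivedMono r rn' (univVoltage r rn') i (e x)) ∧
      (∀ Φ : K, e (Φ, 1) = (Φ, 1)) := by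
  have hinv := hpre.maniplex.invol
  have hcomm' := hpre'.rn_comm
  have hrn' := hpre'.rn_invol
  have hHsub : heartSet r rn' ⊆ ↑(autGroup r) := heart_subset_aut r rn'
  have hHf : FriendlySet rn' rn' (heartSet r rn') := heart_friendly r rn'
  have hheq : heartSet r rn = heartSet r rn' := heart_eq_of_friendly hsub hf h1
  have hcov : ∀ Φ : K, ∃ τ ∈ heartSet r rn', rn' Φ = τ (rn Φ) := by
    intro Φ
    obtain ⟨τ, hτ, h⟩ := heart_covers hsub hf h1 Φ
    exact ⟨τ, hheq ▸ hτ, h⟩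
  have hconn := derived_conn r rn' hpre'
  -- existence of the generator automorphisms of U(K, rn')
  have hu : ∀ Φ : K, ∃ u : Equiv.Perm (K × PresentedGroup (UnivRels r rn')),
      (∀ (i : Fin (n+1)) x, u (derivedMono r rn' (univVoltage r rn') i x)
        = derivedMono r rn' (univVoltage r rn') i (u x)) ∧
      u (rn' Φ, univVoltage r rn' Φ) = (rn Φ, 1) := by
    intro Φ
    obtain ⟨η, hη, hηe⟩ := hcov (rn Φ)
    rw [hpre.rn_invol Φ] at hηe
    obtain ⟨A, hAint, hAbase⟩ := exist_auto r rn' hinv hcomm' hrn' (heartSet r rn')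
      hHsub hHf η hη (univVoltage r rn' (rn Φ))
    obtain ⟨η₂, hη₂, hη₂e⟩ := hcov Φ
    obtain ⟨A', hA'int, hA'base⟩ := exist_auto r rn' hinv hcomm' hrn' (heartSet r rn')
      hHsub hHf η₂ hη₂ (univVoltage r rn' Φ)
    have hA1 : A (Φ, 1) = (rn' (rn Φ), univVoltage r rn' (rn Φ)) := by
      rw [hAbase Φ, ← hηe]
    have hA'1 : A' (rn Φ, 1) = (rn' Φ, univVoltage r rn' Φ) := by
      rw [hA'base (rn Φ), ← hη₂e]
    have hsΦ : derivedMono r rn' (univVoltage r rn') (Fin.last n) (Φ, 1)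
        = (rn' Φ, univVoltage r rn' Φ) := by
      rw [derivedMono_last]
      exact Prod.ext rfl (mul_one _)
    have hsrnΦ : derivedMono r rn' (univVoltage r rn') (Fin.last n) (rn Φ, 1)
        = (rn' (rn Φ), univVoltage r rn' (rn Φ)) := by
      rw [derivedMono_last]
      exact Prod.ext rfl (mul_one _)
    have hA2 : A (rn' Φ, univVoltage r rn' Φ) = (rn Φ, 1) := by
      have h := hAint (Fin.last n) (Φ, 1)
      rw [hsΦ, hA1, derivedMono_last] at h
      rw [h]
      exact Prod.ext (hpre'.rn_invol (rn Φ)) (by rw [uv_rn r rn', inv_mul_cancel])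
    have hA'2 : A' (rn' (rn Φ), univVoltage r rn' (rn Φ)) = (Φ, 1) := by
      have h := hA'int (Fin.last n) (rn Φ, 1)
      rw [hsrnΦ, hA'1, derivedMono_last] at h
      rw [h]
      refine Prod.ext (hpre'.rn_invol Φ) ?_
      rw [uv_rn r rn', inv_mul_cancel]
    have hAA' : ∀ x, A' (A x) = x := by
      intro x
      have hint : ∀ (i : Fin (n+1)) y,
          A' (A (derivedMono r rn' (univVoltage r rn') i y))
            = derivedMono r rn' (univVoltage r rn') i (A' (A y)) := by
        intro i y; rw [hAint, hA'int]
      have hx0 : A' (A (rn' Φ, univVoltage r rn' Φ)) = id (rn' Φ, univVoltage r rn' Φ) := by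
        rw [hA2, hA'1]; rfl
      exact rigidity (B := fun y => A' (A y)) (B₂ := id) hint (fun i y => rfl) hx0 (hconn _ x)
    have hA'A : ∀ x, A (A' x) = x := by
      intro x
      have hint : ∀ (i : Fin (n+1)) y,
          A (A' (derivedMono r rn' (univVoltage r rn') i y))
            = derivedMono r rn' (univVoltage r rn') i (A (A' y)) := by
        intro i y; rw [hA'int, hAint]
      have hx0 : A (A' (rn Φ, 1)) = id ((rn Φ : K), (1 : PresentedGroup (UnivRels r rn'))) := by
        rw [hA'1, hA2]; rfl
      exact rigidity (B := fun y => A (A' y)) (B₂ := id) hint (fun i y => rfl) hx0 (hconn _ x)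
    exact ⟨⟨A, A', hAA', hA'A⟩, hAint, hA2⟩
  choose uu huuint huubase using hu
  have hufacet : ∀ Φ Θ : K, FacetRel r Φ Θ →
      uu Φ (rn' Θ, univVoltage r rn' Θ) = (rn Θ, 1) := by
    intro Φ Θ h
    induction h with
    | refl => exact huubase Φ
    | tail hrel hstep ih =>
      obtain ⟨i, hP, rfl⟩ := hstep
      rename_i b
      have hstep1 : FacetRel r b (r i b) := Relation.ReflTransGen.single ⟨i, hP, rfl⟩
      have harg : ((rn' (r i b) : K), univVoltage r rn' (r i b))
          = derivedMono r rn' (univVoltage r rn') ⟨(i:ℕ), by omega⟩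
              (rn' b, univVoltage r rn' b) := by
        rw [derivedMono_lt r rn' _ _ (by exact i.isLt)]
        exact Prod.ext (hpre'.rn_comm i hP b) (uv_facet r rn' hstep1).symm
      rw [harg, huuint, ih, derivedMono_lt r rn' _ _ (by exact i.isLt)]
      exact Prod.ext (hpre.rn_comm i hP b).symm rfl
  have hR1 : ∀ Φ Θ : K, FacetRel r Φ Θ → uu Φ = uu Θ := by
    intro Φ Θ h
    have hagree : uu Φ (rn' Θ, univVoltage r rn' Θ) = uu Θ (rn' Θ, univVoltage r rn' Θ) := by
      rw [hufacet Φ Θ h, huubase Θ]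
    refine Equiv.ext fun x => ?_
    exact rigidity (B := fun y => uu Φ y) (B₂ := fun y => uu Θ y)
      (huuint Φ) (huuint Θ) hagree (hconn _ x)
  have huΦ1 : ∀ Φ : K, uu Φ (Φ, 1) = (rn' (rn Φ), univVoltage r rn' (rn Φ)) := by
    intro Φ
    have h := huuint Φ (Fin.last n) (rn' Φ, univVoltage r rn' Φ)
    have harg : derivedMono r rn' (univVoltage r rn') (Fin.last n)
        (rn' Φ, univVoltage r rn' Φ) = (Φ, 1) := by
      rw [derivedMono_last]
      exact Prod.ext (hpre'.rn_invol Φ) (by rw [uv_rn r rn', inv_mul_cancel])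
    rw [harg, huubase Φ, derivedMono_last] at h
    rw [h]
    exact Prod.ext rfl (mul_one _)
  have hR2 : ∀ Φ : K, uu Φ * uu (rn Φ) = 1 := by
    intro Φ
    have hval : uu Φ (uu (rn Φ) (rn' (rn Φ), univVoltage r rn' (rn Φ)))
        = id ((rn' (rn Φ) : K), univVoltage r rn' (rn Φ)) := by
      rw [huubase (rn Φ), hpre.rn_invol Φ]
      exact huΦ1 Φ
    refine Equiv.ext fun x => ?_
    have hint2 : ∀ (i : Fin (n+1)) y,
        uu Φ (uu (rn Φ) (derivedMono r rn' (univVoltage r rn') i y))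
          = derivedMono r rn' (univVoltage r rn') i (uu Φ (uu (rn Φ) y)) := by
      intro i y; rw [huuint, huuint]
    have h := rigidity (B := fun y => uu Φ (uu (rn Φ) y)) (B₂ := id)
      hint2 (fun i y => rfl) hval (hconn _ x)
    simpa using h
  have hrels : ∀ w ∈ UnivRels r rn, FreeGroup.lift uu w = 1 := by
    rintro w (⟨Φ, Θ, hF, rfl⟩ | ⟨Φ, rfl⟩)
    · rw [map_mul, map_inv, FreeGroup.lift_apply_of, FreeGroup.lift_apply_of, mul_inv_eq_one]
      exact hR1 _ _ hF
    · rw [map_mul, FreeGroup.lift_apply_of, FreeGroup.lift_apply_of]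
      exact hR2 Φ
  have hρof : ∀ Φ : K, PresentedGroup.toGroup hrels (PresentedGroup.of Φ) = uu Φ :=
    fun Φ => PresentedGroup.toGroup.of hrels
  have hρcomm : ∀ (g : PresentedGroup (UnivRels r rn)) (i : Fin (n+1)) x,
      PresentedGroup.toGroup hrels g (derivedMono r rn' (univVoltage r rn') i x)
        = derivedMono r rn' (univVoltage r rn') i (PresentedGroup.toGroup hrels g x) := by
    have hofcase : ∀ (a : K) (g' : PresentedGroup (UnivRels r rn)),
        (∀ (i : Fin (n+1)) x, PresentedGroup.toGroup hrels g'
            (derivedMono r rn' (univVoltage r rn') i x)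
          = derivedMono r rn' (univVoltage r rn') i (PresentedGroup.toGroup hrels g' x)) →
        ∀ (i : Fin (n+1)) x, PresentedGroup.toGroup hrels (PresentedGroup.of a * g')
            (derivedMono r rn' (univVoltage r rn') i x)
          = derivedMono r rn' (univVoltage r rn') i
              (PresentedGroup.toGroup hrels (PresentedGroup.of a * g') x) := by
      intro a g' ih i x
      rw [map_mul]
      simp only [Equiv.Perm.mul_apply]
      rw [ih, hρof, huuint]
    refine pg_induction _ ?_ hofcase ?_
    · intro i x; rw [map_one]; rfl
    · intro a g' ih
      rw [pg_inv_of r rn a]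
      exact hofcase (rn a) g' ih
  refine ⟨fun x => PresentedGroup.toGroup hrels x.2⁻¹ (x.1, 1), ?_, ?_⟩
  · intro i x
    by_cases hlt : (i:ℕ) < n
    · rw [derivedMono_lt r rn _ i hlt]
      have harg : ((r ⟨(i:ℕ), hlt⟩ x.1 : K), (1 : PresentedGroup (UnivRels r rn')))
          = derivedMono r rn' (univVoltage r rn') i (x.1, 1) :=
        (derivedMono_lt r rn' _ i hlt (x.1, 1)).symm
      show PresentedGroup.toGroup hrels x.2⁻¹ (r ⟨(i:ℕ), hlt⟩ x.1, 1) = _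
      rw [harg, hρcomm]
    · rw [fin_eq_last hlt, derivedMono_last, derivedMono_last]
      show PresentedGroup.toGroup hrels (univVoltage r rn x.1 * x.2)⁻¹ ((rn x.1 : K), 1) = _
      rw [mul_inv_rev, map_mul]
      simp only [Equiv.Perm.mul_apply]
      have hgen : PresentedGroup.toGroup hrels (univVoltage r rn x.1)⁻¹ ((rn x.1 : K), 1)
          = (rn' x.1, univVoltage r rn' x.1) := by
        rw [map_inv]
        rw [show univVoltage r rn x.1 = PresentedGroup.of x.1 from rfl, hρof]
        rw [← huubase x.1]
        exact Equiv.symm_apply_apply _ _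
      rw [hgen]
      have harg2 : ((rn' x.1 : K), univVoltage r rn' x.1)
          = derivedMono r rn' (univVoltage r rn') (Fin.last n) (x.1, 1) := by
        rw [derivedMono_last]
        exact Prod.ext rfl (mul_one _).symm
      rw [harg2, hρcomm, derivedMono_last]
  · intro Φ
    show PresentedGroup.toGroup hrels (1 : PresentedGroup (UnivRels r rn))⁻¹
      ((Φ : K), (1 : PresentedGroup (UnivRels r rn'))) = (Φ, 1)
    rw [inv_one, map_one]
    rfl

end S18
namespace S18
open Function Equiv

variable {K : Type*} {n : ℕ}

theorem fiber_const (r : Fin n → K → K) (rnA rnB : K → K) {GA GB : Type*} [Group GA] [Group GB]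
    (ξA : K → GA) (ξB : K → GB) (hman : IsManiplex n r)
    (F : K × GA → K × GB)
    (hF : ∀ (i : Fin (n+1)) x, F (derivedMono r rnA ξA i x) = derivedMono r rnB ξB i (F x))
    (g : GA) (Φ Ψ : K) : (F (Φ, g)).2 = (F (Ψ, g)).2 := by
  have h := hman.conn Φ Ψ
  induction h with
  | refl => rfl
  | tail hab hstep ih =>
    obtain ⟨i, -, rfl⟩ := hstep
    rename_i b
    have h1 : ((r i b : K), g) = derivedMono r rnA ξA ⟨(i:ℕ), by omega⟩ (b, g) :=
      (derivedMono_lt r rnA ξA ⟨(i:ℕ), by omega⟩ i.isLt (b, g)).symm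
    rw [h1, hF, derivedMono_lt r rnB ξB ⟨(i:ℕ), by omega⟩ i.isLt]
    exact ih

end S18

/-- For pre-extenders `(K, r_n)` and `(K, r_n')` the following are
equivalent: (1) there is an isomorphism `U(K, r_n) → U(K, r_n')` acting as the identity on
the base facet; (2) there is an `(r_n, r_n')`-friendly set containing the identity;
(3) `♥(K, r_n) = ♥(K, r_n')` and `K_{r_n}/♥(K, r_n) = K_{r_n'}/♥(K, r_n')`. -/
theorem statement18 {K : Type*} {n : ℕ} (r : Fin n → K → K) (rn rn' : K → K)
    (hpre : IsPreExtender r rn) (hpre' : IsPreExtender r rn') :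
    ((∃ e : (K × PresentedGroup (UnivRels r rn)) ≃ (K × PresentedGroup (UnivRels r rn')),
        (∀ (i : Fin (n + 1)) (x : K × PresentedGroup (UnivRels r rn)),
          e (derivedMono r rn (univVoltage r rn) i x) =
            derivedMono r rn' (univVoltage r rn') i (e x)) ∧
        ∀ Φ : K, e (Φ, 1) = (Φ, 1)) ↔
      (∃ S : Set (Equiv.Perm K), S ⊆ ↑(autGroup r) ∧ FriendlySet rn rn' S ∧
        (1 : Equiv.Perm K) ∈ S)) ∧
    ((∃ S : Set (Equiv.Perm K), S ⊆ ↑(autGroup r) ∧ FriendlySet rn rn' S ∧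
        (1 : Equiv.Perm K) ∈ S) ↔
      (heartSet r rn = heartSet r rn' ∧
        ∀ Φ : K, ∃ τ ∈ heartSet r rn, rn' Φ = τ (rn Φ))) := by
  constructor
  · constructor
    · -- (1) → (2)
      rintro ⟨e, heint, hebase⟩
      obtain ⟨Φc⟩ := hpre.maniplex.nonempty
      have hesym : ∀ (i : Fin (n+1)) y,
          e.symm (derivedMono r rn' (univVoltage r rn') i y)
            = derivedMono r rn (univVoltage r rn) i (e.symm y) := by
        intro i y
        apply e.injective
        rw [Equiv.apply_symm_apply, heint, Equiv.apply_symm_apply]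
      have hπ : ∀ (Φ : K) g, (e (Φ, g)).2 = (e (Φc, g)).2 := fun Φ g =>
        S18.fiber_const r rn rn' _ _ hpre.maniplex e heint g Φ Φc
      have hπ₂ : ∀ (Ψ : K) h, (e.symm (Ψ, h)).2 = (e.symm (Φc, h)).2 := fun Ψ h =>
        S18.fiber_const r rn' rn _ _ hpre.maniplex e.symm hesym h Ψ Φc
      have hsymm2 : ∀ (Ψ : K) g, (e.symm (Ψ, (e (Φc, g)).2)).2 = g := by
        intro Ψ g
        rw [hπ₂ Ψ]
        have h1 : e.symm ((e (Φc, g)).1, (e (Φc, g)).2) = (Φc, g) := e.symm_apply_apply _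
        have h2 := hπ₂ (e (Φc, g)).1 ((e (Φc, g)).2)
        rw [h1] at h2
        exact h2.symm
      have hleft : ∀ g (Φ : K), (e.symm ((e (Φ, g)).1, (e (Φc, g)).2)).1 = Φ := by
        intro g Φ
        have hx : ((e (Φ, g)).1, (e (Φc, g)).2) = e (Φ, g) := Prod.ext rfl (hπ Φ g).symm
        rw [hx, e.symm_apply_apply]
      have hright : ∀ g (Ψ : K), (e ((e.symm (Ψ, (e (Φc, g)).2)).1, g)).1 = Ψ := by
        intro g Ψ
        have h2 : e.symm (Ψ, (e (Φc, g)).2) = ((e.symm (Ψ, (e (Φc, g)).2)).1, g) :=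
          Prod.ext rfl (hsymm2 Ψ g)
        rw [← h2, e.apply_symm_apply]
      refine ⟨Set.range (fun g : PresentedGroup (UnivRels r rn) =>
        (⟨fun Φ => (e (Φ, g)).1, fun Ψ => (e.symm (Ψ, (e (Φc, g)).2)).1,
          hleft g, hright g⟩ : Equiv.Perm K)), ?_, ?_, ?_⟩
      · rintro _ ⟨g, rfl⟩ i Φ
        show (e ((r i Φ : K), g)).1 = r i ((e (Φ, g)).1)
        have h1 : ((r i Φ : K), g) = derivedMono r rn (univVoltage r rn) ⟨(i:ℕ), by omega⟩ (Φ, g) :=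
          (S18.derivedMono_lt r rn _ ⟨(i:ℕ), by omega⟩ i.isLt (Φ, g)).symm
        rw [h1, heint, S18.derivedMono_lt r rn' _ ⟨(i:ℕ), by omega⟩ i.isLt]
      · rintro Φ _ ⟨g, rfl⟩
        refine ⟨_, Set.mem_range_self (univVoltage r rn Φ * g), ?_⟩
        show rn' ((e (Φ, g)).1) = (e ((rn Φ : K), univVoltage r rn Φ * g)).1
        have h1 : ((rn Φ : K), univVoltage r rn Φ * g)
            = derivedMono r rn (univVoltage r rn) (Fin.last n) (Φ, g) :=
          (S18.derivedMono_last r rn _ (Φ, g)).symm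
        rw [h1, heint, S18.derivedMono_last]
      · refine ⟨1, ?_⟩
        refine Equiv.ext fun Φ => ?_
        show (e (Φ, 1)).1 = Φ
        rw [hebase]
    · -- (2) → (1)
      rintro ⟨S, hsub, hf, h1⟩
      obtain ⟨e₁, he₁int, he₁base⟩ := S18.half r rn rn' hpre hpre' S hsub hf h1
      obtain ⟨e₂, he₂int, he₂base⟩ := S18.half r rn' rn hpre' hpre S⁻¹
        (S18.inv_subset_aut hsub) (S18.friendly_inv hf) (S18.one_mem_inv h1)
      obtain ⟨Φc⟩ := hpre.maniplex.nonempty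
      have hconnU := S18.derived_conn r rn hpre
      have hconnU' := S18.derived_conn r rn' hpre'
      have hli : ∀ x, e₂ (e₁ x) = x := by
        intro x
        have hint : ∀ (i : Fin (n+1)) y,
            e₂ (e₁ (derivedMono r rn (univVoltage r rn) i y))
              = derivedMono r rn (univVoltage r rn) i (e₂ (e₁ y)) := by
          intro i y; rw [he₁int, he₂int]
        have hx0 : e₂ (e₁ (Φc, 1)) = id ((Φc : K), (1 : PresentedGroup (UnivRels r rn))) := by
          rw [he₁base, he₂base]; rfl
        exact S18.rigidity (B := fun y => e₂ (e₁ y)) (B₂ := id) hint (fun i y => rfl) hx0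
          (hconnU _ x)
      have hri : ∀ x, e₁ (e₂ x) = x := by
        intro x
        have hint : ∀ (i : Fin (n+1)) y,
            e₁ (e₂ (derivedMono r rn' (univVoltage r rn') i y))
              = derivedMono r rn' (univVoltage r rn') i (e₁ (e₂ y)) := by
          intro i y; rw [he₂int, he₁int]
        have hx0 : e₁ (e₂ (Φc, 1)) = id ((Φc : K), (1 : PresentedGroup (UnivRels r rn'))) := by
          rw [he₂base, he₁base]; rfl
        exact S18.rigidity (B := fun y => e₁ (e₂ y)) (B₂ := id) hint (fun i y => rfl) hx0
          (hconnU' _ x)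
      exact ⟨⟨e₁, e₂, hli, hri⟩, he₁int, he₁base⟩
  · constructor
    · rintro ⟨S, hsub, hf, h1⟩
      exact ⟨S18.heart_eq_of_friendly hsub hf h1, S18.heart_covers hsub hf h1⟩
    · rintro ⟨hheq, hc⟩
      exact ⟨heartSet r rn, S18.heart_subset_aut r rn, S18.friendly_of_heart hheq hc,
        S18.one_mem_heart r rn⟩
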